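/- arXiv:2510.11255 — 6 statements merged into one kernel-verified Lean document; each statement's English description precedes it below -/
import Mathlib

section
/- The carrier games u_π, indexed by nonempty injective sequences π of a finite player set N, where u_π(π') = 1 if π is a proper prefix of π' or π = π', and 0 otherwise, are linearly independent as vectors in ℝ^Π and span ℝ^Π; hence every worth function v : Π → ℝ is a unique linear combination of the u_π. -/
noncomputable section

/-- The set Π of nonempty injective sequences over `Fin n`. -/
def PiSeq (n : ℕ) := {l : List (Fin n) // l ≠ [] ∧ l.Nodup}

/-- The carrier game over a sequence π: worth 1 on sequences having π as a prefix, 0 otherwise. -/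
def carrier {n : ℕ} (π : PiSeq n) : PiSeq n → ℝ :=
  fun π' => if π.1 <+: π'.1 then 1 else 0

/-! The indicators of the principal up-sets of a finite poset are unitriangular with respect to the
order: evaluating `∑ a, g a • 1_{Ici a}` at `b` gives `∑ a ≤ b, g a`, so the coefficients vanish
by well-founded induction. Counting dimensions, they form a basis. The carrier games are the
instance of this for the prefix order on sequences. -/

section UpperIndicator

variable {α : Type*} [PartialOrder α] [Finite α]

theorem linearIndependent_indicator_Ici (R : Type*) [Ring R] :
    LinearIndependent R (fun a : α => (Set.Ici a).indicator (1 : α → R)) := by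
  have := Fintype.ofFinite α
  classical
  rw [Fintype.linearIndependent_iff]
  intro g hg b
  induction b using WellFoundedLT.induction with
  | _ b ih =>
  have hsum : ∑ a, (if a ≤ b then g a else 0) = 0 := by
    simpa [Set.indicator_apply] using congrFun hg b
  have hbelow : ∀ a, a ≠ b → (if a ≤ b then g a else 0) = 0 := fun a hab => by
    split_ifs with hle
    exacts [ih a (hle.lt_of_ne hab), rfl]
  rwa [Finset.sum_eq_single_of_mem b (Finset.mem_univ b) fun a _ => hbelow a, if_pos le_rfl] at hsum

theorem span_range_indicator_Ici (K : Type*) [DivisionRing K] :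
    Submodule.span K (Set.range fun a : α => (Set.Ici a).indicator (1 : α → K)) = ⊤ := by
  have := Fintype.ofFinite α
  exact (linearIndependent_indicator_Ici K).span_eq_top_of_card_eq_finrank'
    (Module.finrank_fintype_fun_eq_card K).symm

end UpperIndicator

namespace PiSeq

variable {n : ℕ}

instance : Finite (PiSeq n) :=
  Finite.of_injective (fun π : PiSeq n => (⟨π.1, π.2.2⟩ : {l : List (Fin n) // l.Nodup}))
    fun _ _ h => Subtype.ext (by simpa using h)

instance : PartialOrder (PiSeq n) where
  le π π' := π.1 <+: π'.1
  le_refl π := List.prefix_refl π.1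
  le_trans _ _ _ := List.IsPrefix.trans
  le_antisymm _ _ h h' := Subtype.ext (h.eq_of_length (h.length_le.antisymm h'.length_le))

theorem le_iff_isPrefix {π π' : PiSeq n} : π ≤ π' ↔ π.1 <+: π'.1 := Iff.rfl

end PiSeq

theorem carrier_eq_indicator_Ici {n : ℕ} :
    carrier (n := n) = fun π => (Set.Ici π).indicator 1 := by
  funext π π'
  classical
  simp [carrier, Set.indicator_apply, PiSeq.le_iff_isPrefix]

/-- the carrier games are linearly independent and span ℝ^Π; hence every
    worth function is a (unique) linear combination of carrier games. -/
theorem stmt7 {n : ℕ} :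
    LinearIndependent ℝ (carrier (n := n)) ∧
      Submodule.span ℝ (Set.range (carrier (n := n))) = ⊤ := by
  rw [carrier_eq_indicator_Ici]
  exact ⟨linearIndependent_indicator_Ici ℝ, span_range_indicator_Ici ℝ⟩
end
end

section
/- Let u_{π,α} be the scaled carrier game taking value α on sequences having π as a prefix and 0 otherwise. If a solution concept φ satisfies Sequential Efficiency and the Sequential Null Player property on the game (N, u_{π,α}), then φ_i(π', u_{π,α}) = α if i = ℓ(π) (the last player of π) and π ⊑ π', and φ_i(π', u_{π,α}) = 0 otherwise. -/
noncomputable section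

/-- Sequences of players (lists over `Fin n`); injective sequences are `Nodup` lists. -/
abbrev TSeq (n : ℕ) := List (Fin n)

/-- `prefBefore π i` is the longest prefix of `π` not containing `i`. -/
def prefBefore {n : ℕ} (π : TSeq n) (i : Fin n) : TSeq n := π.takeWhile (· ≠ i)

/-- The marginal-contribution solution concept. -/
def margSol {n : ℕ} (v : TSeq n → ℝ) (π : TSeq n) (i : Fin n) : ℝ :=
  if i ∈ π then v (prefBefore π i ++ [i]) - v (prefBefore π i) else 0

/-- The extended Shapley value: average marginal contribution over all full sequences,
    identified with permutations of `Fin n` via `List.ofFn`. -/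
def extShap {n : ℕ} (v : TSeq n → ℝ) (i : Fin n) : ℝ :=
  (1 / n.factorial : ℝ) * ∑ σ : Equiv.Perm (Fin n), margSol v (List.ofFn ⇑σ) i

/-! Only the last player of `π` can turn a sequence into one extending `π`, so every other
player is null in the carrier game; efficiency then hands the whole worth to `π.getLast`. -/

theorem List.prefix_concat_iff_of_ne_getLast {α : Type*} {π σ : List α} {i : α}
    (hne : π ≠ []) (hi : i ≠ π.getLast hne) : π <+: σ ++ [i] ↔ π <+: σ := by
  refine List.prefix_concat_iff.trans (or_iff_right ?_)
  rintro rfl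
  simp at hi

theorem List.not_prefix_of_getLast_not_mem {α : Type*} {π π' : List α} (hne : π ≠ [])
    (hmem : π.getLast hne ∉ π') : ¬ π <+: π' :=
  fun hp => hmem (hp.subset (List.getLast_mem hne))

theorem stmt8_general {n : ℕ} (π : TSeq n) (hne : π ≠ []) (α : ℝ)
    (φ : TSeq n → Fin n → ℝ)
    (hzero : ∀ (π' : TSeq n) (i : Fin n), i ∉ π' → φ π' i = 0)
    (SE : ∀ π' : TSeq n, π'.Nodup → π' ≠ [] →
      ∑ i ∈ π'.toFinset, φ π' i = (if π <+: π' then α else 0))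
    (SNP : ∀ i : Fin n,
      (∀ σ : TSeq n, σ.Nodup → i ∉ σ →
        (if π <+: σ ++ [i] then α else (0:ℝ)) = (if π <+: σ then α else 0)) →
      ∀ π' : TSeq n, φ π' i = 0) :
    ∀ π' : TSeq n, π'.Nodup → π' ≠ [] → ∀ i : Fin n,
      φ π' i = if i = π.getLast hne ∧ π <+: π' then α else 0 := by
  have hnull : ∀ i, i ≠ π.getLast hne → ∀ π', φ π' i = 0 := fun i hi =>
    SNP i fun σ _ _ => by simp only [List.prefix_concat_iff_of_ne_getLast hne hi]
  intro π' hnd' hne' i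
  by_cases hi : i = π.getLast hne
  · subst hi
    by_cases hmem : π.getLast hne ∈ π'
    · have hsum : ∑ j ∈ π'.toFinset, φ π' j = φ π' (π.getLast hne) :=
        Finset.sum_eq_single_of_mem _ (List.mem_toFinset.mpr hmem)
          fun j _ hj => hnull j hj π'
      rw [← hsum, SE π' hnd' hne']
      simp
    · simp [hzero π' _ hmem, List.not_prefix_of_getLast_not_mem hne hmem]
  · simp [hnull i hi π', hi]

/-- on the scaled carrier game, SE + SNP force the whole worth α to the last
    player of π on sequences extending π, and 0 everywhere else. -/
theorem stmt8 {n : ℕ} (π : TSeq n) (hnd : π.Nodup) (hne : π ≠ []) (α : ℝ)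
    (φ : TSeq n → Fin n → ℝ)
    (hzero : ∀ (π' : TSeq n) (i : Fin n), i ∉ π' → φ π' i = 0)
    (SE : ∀ π' : TSeq n, π'.Nodup → π' ≠ [] →
      ∑ i ∈ π'.toFinset, φ π' i = (if π <+: π' then α else 0))
    (SNP : ∀ i : Fin n,
      (∀ σ : TSeq n, σ.Nodup → i ∉ σ →
        (if π <+: σ ++ [i] then α else (0:ℝ)) = (if π <+: σ then α else 0)) →
      ∀ π' : TSeq n, φ π' i = 0) :
    ∀ π' : TSeq n, π'.Nodup → π' ≠ [] → ∀ i : Fin n,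
      φ π' i = if i = π.getLast hne ∧ π <+: π' then α else 0 :=
  stmt8_general π hne α φ hzero SE SNP
end
end

section
/- An extended solution concept ψ satisfies Extended Efficiency, Extended Additivity, and the Extended Null Player property for all TCGs on a fixed finite player set N if and only if ψ = Ext-Shap, where Ext-Shap_i(v) = (1/n!) Σ_{π full sequence} (v(π_i + i) − v(π_i)). -/
noncomputable section

lemma takeWhile_ne_get {α : Type*} [DecidableEq α] :
    ∀ (l : List α), l.Nodup → ∀ (k : Fin l.length),
      l.takeWhile (· ≠ l.get k) = l.take k := by
  intro l
  induction l with
  | nil => intro _ k; exact absurd k.2 (by simp)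
  | cons a t ih =>
    intro hnd k
    rcases k with ⟨k, hk⟩
    cases k with
    | zero => simp [List.takeWhile]
    | succ j =>
      have hj : j < t.length := by simpa using hk
      have hane : a ≠ t.get ⟨j, hj⟩ := by
        intro h
        exact (List.nodup_cons.mp hnd).1 (h ▸ List.get_mem t ⟨j, hj⟩)
      simp only [List.get_cons_succ]
      rw [List.takeWhile_cons_of_pos (by simpa using hane)]
      rw [ih (List.nodup_cons.mp hnd).2 ⟨j, hj⟩]
      simp

lemma sum_margSol {n : ℕ} (v : TSeq n → ℝ) (hv : v [] = 0) (σ : Equiv.Perm (Fin n)) :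
    ∑ i : Fin n, margSol v (List.ofFn ⇑σ) i = v (List.ofFn ⇑σ) := by
  set π : TSeq n := List.ofFn ⇑σ with hπ
  have hlen : π.length = n := by simp [hπ]
  have hnd : π.Nodup := List.nodup_ofFn.mpr σ.injective
  have key : ∀ k : Fin n, margSol v π (σ k)
      = v (π.take (k + 1)) - v (π.take k) := by
    intro k
    have hmem : σ k ∈ π := by simp [hπ, List.mem_ofFn]
    have hk' : (k : ℕ) < π.length := by rw [hlen]; exact k.2
    have hget : π.get ⟨k, hk'⟩ = σ k := by simp [hπ]
    have hpref : prefBefore π (σ k) = π.take k := by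
      rw [prefBefore, ← hget, takeWhile_ne_get π hnd ⟨k, hk'⟩]
    have hconcat : π.take k ++ [σ k] = π.take (k + 1) := by
      rw [← hget]; simpa [List.concat_eq_append] using List.take_concat_get π (k:ℕ) hk'
    rw [margSol, if_pos hmem, hpref, hconcat]
  calc ∑ i : Fin n, margSol v π i = ∑ k : Fin n, margSol v π (σ k) :=
        (Equiv.sum_comp σ (margSol v π)).symm
    _ = ∑ k : Fin n, (v (π.take (k + 1)) - v (π.take k)) := by
        exact Finset.sum_congr rfl fun k _ => key k
    _ = ∑ k ∈ Finset.range n, (v (π.take (k + 1)) - v (π.take k)) :=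
        Fin.sum_univ_eq_sum_range (fun k => v (π.take (k + 1)) - v (π.take k)) n
    _ = v (π.take n) - v (π.take 0) := Finset.sum_range_sub (fun k => v (π.take k)) n
    _ = v π := by rw [List.take_of_length_le (le_of_eq hlen)]; simp [hv]

lemma extShap_eff {n : ℕ} (v : TSeq n → ℝ) (hv : v [] = 0) :
    ∑ i : Fin n, extShap v i
      = (1 / n.factorial : ℝ) * ∑ σ : Equiv.Perm (Fin n), v (List.ofFn ⇑σ) := by
  simp only [extShap, ← Finset.mul_sum]
  rw [Finset.sum_comm]
  congr 1
  exact Finset.sum_congr rfl fun σ _ => sum_margSol v hv σ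

lemma extShap_add {n : ℕ} (u v : TSeq n → ℝ) (i : Fin n) :
    extShap u i + extShap v i = extShap (fun σ => u σ + v σ) i := by
  simp only [extShap, ← mul_add, ← Finset.sum_add_distrib]
  congr 1
  refine Finset.sum_congr rfl fun σ _ => ?_
  by_cases h : i ∈ List.ofFn ⇑σ <;> simp [margSol, h] <;> ring

lemma extShap_null {n : ℕ} (v : TSeq n → ℝ) (i : Fin n)
    (h : ∀ σ : TSeq n, σ.Nodup → i ∉ σ → v (σ ++ [i]) = v σ) :
    extShap v i = 0 := by
  rw [extShap]
  have : ∀ σ : Equiv.Perm (Fin n), margSol v (List.ofFn ⇑σ) i = 0 := by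
    intro σ
    rw [margSol]
    split
    · have hnd : (List.ofFn ⇑σ).Nodup := List.nodup_ofFn.mpr σ.injective
      have hsub : List.Sublist (prefBefore (List.ofFn ⇑σ) i) (List.ofFn ⇑σ) := List.takeWhile_sublist _
      have hndp : (prefBefore (List.ofFn ⇑σ) i).Nodup := hnd.sublist hsub
      have hni : i ∉ prefBefore (List.ofFn ⇑σ) i := by
        intro hmem
        have := List.mem_takeWhile_imp hmem
        simp at this
      rw [h _ hndp hni]; ring
    · rfl
  simp [this]

lemma prefix_snoc_iff {α : Type*} {σ τ : List α} {j : α} (hσ : σ ≠ [])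
    (hj : j ≠ σ.getLast hσ) : σ <+: τ ++ [j] ↔ σ <+: τ := by
  constructor
  · intro h
    rcases le_or_gt σ.length τ.length with hle | hlt
    · exact List.prefix_of_prefix_length_le h (List.prefix_append τ [j]) hle
    · exfalso
      have hlen2 : σ.length = (τ ++ [j]).length := by
        have := h.length_le
        simp only [List.length_append, List.length_singleton] at this ⊢
        omega
      have heq : σ = τ ++ [j] := List.IsPrefix.eq_of_length h hlen2
      apply hj
      subst heq
      simp [List.getLast_append]
  · exact fun h => h.trans (List.prefix_append τ [j])

/-- the basis "prefix" game associated to `σ`, with coefficient from `v`. -/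
def gG {n : ℕ} (v : TSeq n → ℝ) (σ : TSeq n) : TSeq n → ℝ :=
  fun τ => if σ ≠ [] ∧ σ.Nodup ∧ σ <+: τ then v σ - v σ.dropLast else 0

lemma gG_nil {n : ℕ} (v : TSeq n → ℝ) (σ : TSeq n) : gG v σ [] = 0 := by
  rw [gG, if_neg]
  rintro ⟨h1, -, h3⟩
  exact h1 (List.prefix_nil.mp h3)

lemma gG_null {n : ℕ} (v : TSeq n → ℝ) {σ : TSeq n} {j : Fin n} (hσ : σ ≠ [])
    (hj : j ≠ σ.getLast hσ) (τ : TSeq n) : gG v σ (τ ++ [j]) = gG v σ τ := by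
  simp only [gG]
  exact if_congr
    (and_congr_right fun _ => and_congr_right fun _ => prefix_snoc_iff hσ hj) rfl rfl

lemma gG_degenerate {n : ℕ} (v : TSeq n → ℝ) {σ : TSeq n} (h : ¬(σ ≠ [] ∧ σ.Nodup)) :
    gG v σ = fun _ => 0 := by
  funext τ
  rw [gG, if_neg]
  rintro ⟨h1, h2, -⟩
  exact h ⟨h1, h2⟩

/-- A `Finset` containing all nodup lists over `Fin n`. -/
def allND (n : ℕ) : Finset (TSeq n) :=
  Finset.image (fun p : Equiv.Perm (Fin n) × Fin (n + 1) => (List.ofFn ⇑p.1).take p.2)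
    Finset.univ

lemma mem_allND {n : ℕ} {σ : TSeq n} (h : σ.Nodup) : σ ∈ allND n := by
  classical
  set r : TSeq n := (σ.toFinsetᶜ).toList with hr
  have hrnd : r.Nodup := Finset.nodup_toList _
  have hdisj : ∀ a ∈ σ, a ∉ r := by
    intro a ha har
    rw [hr, Finset.mem_toList, Finset.mem_compl] at har
    exact har (List.mem_toFinset.mpr ha)
  set l : TSeq n := σ ++ r with hl
  have hlnd : l.Nodup := by
    rw [hl, List.nodup_append]
    exact ⟨h, hrnd, fun a ha b hb hab => hdisj a ha (hab ▸ hb)⟩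
  have hσlen : σ.length ≤ n := by
    simpa using h.length_le_card
  have hllen : l.length = n := by
    rw [hl, List.length_append, hr, Finset.length_toList, Finset.card_compl,
      List.toFinset_card_of_nodup h, Fintype.card_fin]
    omega
  have hinj : Function.Injective (fun k : Fin n => l.get (Fin.cast hllen.symm k)) := by
    intro a b hab
    have := (List.nodup_iff_injective_get.mp hlnd) hab
    simpa [Fin.ext_iff] using this
  let e : Equiv.Perm (Fin n) :=
    Equiv.ofBijective _ ((Finite.injective_iff_bijective).mp hinj)
  have hofn : List.ofFn ⇑e = l := by
    apply List.ext_get (by simp [hllen])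
    intro m h1 h2
    simp [e, Equiv.ofBijective]
  rw [allND, Finset.mem_image]
  refine ⟨(e, ⟨σ.length, by omega⟩), Finset.mem_univ _, ?_⟩
  simp only [hofn]
  rw [hl, List.take_left]

lemma sum_gG {n : ℕ} (v : TSeq n → ℝ) (hv : v [] = 0) {τ : TSeq n} (hτ : τ.Nodup) :
    ∑ σ ∈ allND n, gG v σ τ = v τ := by
  classical
  simp only [gG]
  rw [Finset.sum_ite, Finset.sum_const_zero, add_zero]
  have hfe : (allND n).filter (fun σ => σ ≠ [] ∧ σ.Nodup ∧ σ <+: τ)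
      = (Finset.range τ.length).image (fun k => τ.take (k + 1)) := by
    ext σ
    simp only [Finset.mem_filter, Finset.mem_image, Finset.mem_range]
    constructor
    · rintro ⟨-, hne, -, hpre⟩
      refine ⟨σ.length - 1, ?_, ?_⟩
      · have h1 := hpre.length_le
        have h2 : 0 < σ.length := List.length_pos_iff.mpr hne
        omega
      · have h2 : 0 < σ.length := List.length_pos_iff.mpr hne
        have : σ.length - 1 + 1 = σ.length := by omega
        rw [this]
        exact (List.prefix_iff_eq_take.mp hpre).symm
    · rintro ⟨k, hk, rfl⟩
      have hnd : (τ.take (k + 1)).Nodup := hτ.sublist (List.take_sublist _ _)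
      have hlen : (τ.take (k + 1)).length = k + 1 := by
        rw [List.length_take]; omega
      have hne : τ.take (k + 1) ≠ [] := by
        intro h; rw [h] at hlen; simp at hlen
      exact ⟨mem_allND hnd, hne, hnd, List.take_prefix _ _⟩
  rw [hfe, Finset.sum_image (by
    intro a ha b hb hab
    have := congrArg List.length hab
    rw [List.length_take, List.length_take] at this
    simp only [Finset.mem_coe, Finset.mem_range, Finset.coe_range, Set.mem_Iio] at ha hb
    omega)]
  have hterm : ∀ k ∈ Finset.range τ.length,
      v (τ.take (k + 1)) - v ((τ.take (k + 1)).dropLast)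
        = v (τ.take (k + 1)) - v (τ.take k) := by
    intro k hk
    rw [Finset.mem_range] at hk
    have h1 : τ.take k ++ [τ.get ⟨k, hk⟩] = τ.take (k + 1) := by
      simpa [List.concat_eq_append] using List.take_concat_get τ k hk
    rw [← h1, List.dropLast_concat]
  rw [Finset.sum_congr rfl hterm, Finset.sum_range_sub (fun k => v (τ.take k)) τ.length]
  rw [List.take_of_length_le le_rfl]
  simp [hv]

lemma addFin {n : ℕ} (χ : (TSeq n → ℝ) → Fin n → ℝ)
    (hadd : ∀ u v : TSeq n → ℝ, u [] = 0 → v [] = 0 → ∀ i : Fin n,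
      χ u i + χ v i = χ (fun σ => u σ + v σ) i) :
    (∀ i : Fin n, χ (fun _ => 0) i = 0) ∧
    ∀ {β : Type} [DecidableEq β] (S : Finset β) (g : β → TSeq n → ℝ),
      (∀ s ∈ S, g s [] = 0) → ∀ i : Fin n,
      χ (fun τ => ∑ s ∈ S, g s τ) i = ∑ s ∈ S, χ (g s) i := by
  have hzero : ∀ i : Fin n, χ (fun _ => 0) i = 0 := by
    intro i
    have h := hadd (fun _ => 0) (fun _ => 0) rfl rfl i
    have he : (fun (σ : TSeq n) => (0 : ℝ) + 0) = (fun _ => (0 : ℝ)) := by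
      funext; ring
    rw [he] at h
    linarith
  refine ⟨hzero, ?_⟩
  intro β _ S g hg i
  induction S using Finset.induction_on with
  | empty => simpa using hzero i
  | @insert a S ha ih =>
    have hg' : ∀ s ∈ S, g s [] = 0 := fun s hs => hg s (Finset.mem_insert_of_mem hs)
    have h1 : (fun τ => ∑ s ∈ insert a S, g s τ)
        = (fun τ => g a τ + ∑ s ∈ S, g s τ) := by
      funext τ; rw [Finset.sum_insert ha]
    rw [h1, ← hadd (g a) (fun τ => ∑ s ∈ S, g s τ)
      (hg a (Finset.mem_insert_self a S))
      (by exact Finset.sum_eq_zero hg') i,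
      ih hg', Finset.sum_insert ha]

/-- an extended solution concept satisfies EE, EA and ENP for all TCGs iff it
    is the extended Shapley value. -/
theorem stmt13 {n : ℕ} (ψ : (TSeq n → ℝ) → Fin n → ℝ) :
    ((∀ v : TSeq n → ℝ, v [] = 0 → ∑ i : Fin n, ψ v i
        = (1 / n.factorial : ℝ) * ∑ σ : Equiv.Perm (Fin n), v (List.ofFn ⇑σ)) ∧
     (∀ u v : TSeq n → ℝ, u [] = 0 → v [] = 0 → ∀ i : Fin n,
        ψ u i + ψ v i = ψ (fun σ => u σ + v σ) i) ∧
     (∀ v : TSeq n → ℝ, v [] = 0 → ∀ i : Fin n,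
        (∀ σ : TSeq n, σ.Nodup → i ∉ σ → v (σ ++ [i]) = v σ) → ψ v i = 0))
    ↔ (∀ v : TSeq n → ℝ, v [] = 0 → ∀ i : Fin n, ψ v i = extShap v i) := by
  constructor
  · rintro ⟨hEE, hEA, hENP⟩ v hv i
    classical
    obtain ⟨hψ0, hψfin⟩ := addFin ψ hEA
    obtain ⟨hE0, hEfin⟩ := addFin extShap (fun u v _ _ i => extShap_add u v i)
    set s : TSeq n → ℝ := fun τ => ∑ σ ∈ allND n, gG v σ τ with hs
    have hs0 : s [] = 0 := Finset.sum_eq_zero fun σ _ => gG_nil v σ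
    set junk : TSeq n → ℝ := fun τ => v τ - s τ with hjk
    have hjnod : ∀ τ : TSeq n, τ.Nodup → junk τ = 0 := by
      intro τ hτ
      have : s τ = v τ := sum_gG v hv hτ
      simp [hjk, this]
    have hjunk0 : junk [] = 0 := hjnod [] List.nodup_nil
    have hjnull : ∀ j : Fin n, ∀ τ : TSeq n, τ.Nodup → j ∉ τ →
        junk (τ ++ [j]) = junk τ := by
      intro j τ hτ hjτ
      have h1 : (τ ++ [j]).Nodup := by simp [List.nodup_append, hτ, hjτ]; exact fun a ha h => hjτ (h ▸ ha)
      rw [hjnod _ h1, hjnod _ hτ]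
    have hfun : (fun σ : TSeq n => junk σ + s σ) = v := by
      funext τ; simp [hjk]
    have key : ∀ σ ∈ allND n, ψ (gG v σ) i = extShap (gG v σ) i := by
      intro σ _
      by_cases hcase : σ ≠ [] ∧ σ.Nodup
      · obtain ⟨hne, hnd⟩ := hcase
        have hnullAll : ∀ k : Fin n, k ≠ σ.getLast hne →
            ψ (gG v σ) k = 0 ∧ extShap (gG v σ) k = 0 := by
          intro k hk
          have hhyp : ∀ τ : TSeq n, τ.Nodup → k ∉ τ → gG v σ (τ ++ [k]) = gG v σ τ :=
            fun τ _ _ => gG_null v hne hk τ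
          exact ⟨hENP _ (gG_nil v σ) k hhyp, extShap_null _ k hhyp⟩
        by_cases hj : i = σ.getLast hne
        · have htotψ := hEE (gG v σ) (gG_nil v σ)
          have htotE := extShap_eff (gG v σ) (gG_nil v σ)
          have h1 : ψ (gG v σ) i + ∑ k ∈ Finset.univ.erase i, ψ (gG v σ) k
              = ∑ k : Fin n, ψ (gG v σ) k := Finset.add_sum_erase _ _ (Finset.mem_univ i)
          have h2 : extShap (gG v σ) i + ∑ k ∈ Finset.univ.erase i, extShap (gG v σ) k
              = ∑ k : Fin n, extShap (gG v σ) k :=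
            Finset.add_sum_erase _ _ (Finset.mem_univ i)
          have e1 : ∑ k ∈ Finset.univ.erase i, ψ (gG v σ) k = 0 :=
            Finset.sum_eq_zero fun k hk =>
              (hnullAll k (hj ▸ Finset.ne_of_mem_erase hk)).1
          have e2 : ∑ k ∈ Finset.univ.erase i, extShap (gG v σ) k = 0 :=
            Finset.sum_eq_zero fun k hk =>
              (hnullAll k (hj ▸ Finset.ne_of_mem_erase hk)).2
          rw [e1, htotψ] at h1
          rw [e2, htotE] at h2
          linarith
        · exact ((hnullAll i hj).1).trans ((hnullAll i hj).2).symm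
      · rw [gG_degenerate v hcase, hψ0 i, hE0 i]
    have hsplitψ := hEA junk s hjunk0 hs0 i
    rw [hfun] at hsplitψ
    have hsplitE := extShap_add junk s i
    rw [hfun] at hsplitE
    have hψjunk : ψ junk i = 0 := hENP junk hjunk0 i (hjnull i)
    have hEjunk : extShap junk i = 0 := extShap_null junk i (hjnull i)
    have hψs : ψ s i = ∑ σ ∈ allND n, ψ (gG v σ) i :=
      hψfin (allND n) (gG v) (fun σ _ => gG_nil v σ) i
    have hEs : extShap s i = ∑ σ ∈ allND n, extShap (gG v σ) i :=
      hEfin (allND n) (gG v) (fun σ _ => gG_nil v σ) i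
    have hsum : ∑ σ ∈ allND n, ψ (gG v σ) i = ∑ σ ∈ allND n, extShap (gG v σ) i :=
      Finset.sum_congr rfl key
    rw [← hsplitψ, ← hsplitE, hψjunk, hEjunk, hψs, hEs, hsum]
  · intro h
    refine ⟨?_, ?_, ?_⟩
    · intro v hv
      rw [Finset.sum_congr rfl (fun i _ => h v hv i)]
      exact extShap_eff v hv
    · intro u v hu hv i
      rw [h u hu i, h v hv i, h (fun σ => u σ + v σ) (by simp [hu, hv]) i]
      exact extShap_add u v i
    · intro v hv i hnull
      rw [h v hv i]
      exact extShap_null v i hnull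
end
end

section
/- Ext-Shap satisfies Extended Symmetry: if v(π) = v(π_{i↔j}) for all sequences π, then Ext-Shap_i(v) = Ext-Shap_j(v), where Ext-Shap_i(v) = (1/n!) Σ_{π full sequence} (v(π_i + i) − v(π_i)). -/
noncomputable section

/-- `swapSeq i j π` swaps players `i` and `j` throughout the sequence `π`. -/
def swapSeq {n : ℕ} (i j : Fin n) (π : TSeq n) : TSeq n := π.map (Equiv.swap i j)

section Invariance

variable {n : ℕ}

theorem prefBefore_map (e : Equiv.Perm (Fin n)) (π : TSeq n) (k : Fin n) :
    prefBefore (π.map e) (e k) = (prefBefore π k).map e := by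
  simp only [prefBefore, List.takeWhile_map, Function.comp_def, ne_eq,
    EmbeddingLike.apply_eq_iff_eq]

theorem nodup_prefBefore_append {π : TSeq n} (hπ : π.Nodup) (k : Fin n) :
    (prefBefore π k ++ [k]).Nodup := by
  have hk : k ∉ prefBefore π k := fun h => by simpa using List.mem_takeWhile_imp h
  exact List.nodup_append.mpr ⟨(List.takeWhile_sublist _).nodup hπ, List.nodup_singleton k,
    fun a ha b hb => by rw [List.mem_singleton.mp hb]; exact ne_of_mem_of_not_mem ha hk⟩

theorem margSol_map {v : TSeq n → ℝ} (e : Equiv.Perm (Fin n))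
    (hv : ∀ π : TSeq n, π.Nodup → v (π.map e) = v π) {π : TSeq n} (hπ : π.Nodup) (k : Fin n) :
    margSol v (π.map e) (e k) = margSol v π k := by
  have hpk := nodup_prefBefore_append hπ k
  have hmap : (prefBefore π k).map e ++ [e k] = (prefBefore π k ++ [k]).map e := by simp
  simp only [margSol, prefBefore_map, List.mem_map_of_injective e.injective, hmap, hv _ hpk,
    hv _ (List.nodup_append.mp hpk).1]

/-- Relabelling the players by `e` permutes the full sequences, so it only reindexes the sum. -/
theorem extShap_apply_eq_of_map_invariant {v : TSeq n → ℝ} (e : Equiv.Perm (Fin n))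
    (hv : ∀ π : TSeq n, π.Nodup → v (π.map e) = v π) (k : Fin n) :
    extShap v (e k) = extShap v k := by
  unfold extShap
  congr 1
  rw [← Equiv.sum_comp (Equiv.mulLeft e)]
  refine Finset.sum_congr rfl fun σ _ => ?_
  rw [Equiv.coe_mulLeft, Equiv.Perm.coe_mul, ← List.map_ofFn,
    margSol_map e hv (List.nodup_ofFn.mpr σ.injective)]

end Invariance

/-- Ext-Shap satisfies Extended Symmetry. -/
theorem stmt15 {n : ℕ} (v : TSeq n → ℝ) (i j : Fin n)
    (hsym : ∀ π : TSeq n, π.Nodup → v (swapSeq i j π) = v π) :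
    extShap v i = extShap v j := by
  simpa only [Equiv.swap_apply_right] using
    extShap_apply_eq_of_map_invariant (Equiv.swap i j) hsym j
end
end

section
/- There exists a 3-player temporal cooperative game that is monotone and admits exactly one basis solution x, and for which Ext-Shap_1 > x_1; consequently no solution concept satisfying I4OA, OIR, and SE can have its reduction equal to Ext-Shap. Concretely, the game with v(1)=1, v(2)=3, v(3)=4, v(12)=3, v(13)=4, v(21)=4, v(23)=5, v(31)=5, v(32)=5, v(123)=7, v(132)=6, v(213)=8, v(231)=7, v(312)=7, v(321)=7 has unique basis solution x=(1,3,4) (with optimal sequence 213 of worth 8), while Ext-Shap_1 = 8/6 > 1. -/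
noncomputable section

/-!
Since the worth of `213` is the maximum 8, the singleton constraints `x₁ ≥ 1`, `x₂ ≥ 3`,
`x₃ ≥ 4` of a basis solution already add up to 8, so `(1, 3, 4)` is the only one. On the other
hand, a solution concept `φ` satisfying SE and I4OA makes `φ(213)` a basis solution and bounds
each average `(1/3!) ∑_σ φ(σ)ᵢ` by `φ(213)ᵢ`. If that average were Ext-Shap, we would get
`8/6 = Ext-Shap₁ ≤ φ(213)₁ = 1`.
-/

-- `permutations'` rather than `permutations`, which is defined by well-founded recursion and
-- does not reduce under `decide`.
def injSeqs (n : ℕ) : List (TSeq n) :=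
  (List.finRange n).sublists.flatMap List.permutations'

theorem mem_injSeqs {n : ℕ} {π : TSeq n} (h : π.Nodup) : π ∈ injSeqs n := by
  obtain ⟨s, hperm, hsub⟩ := List.subperm_of_subset h fun i _ => List.mem_finRange i
  exact List.mem_flatMap.2 ⟨s, List.mem_sublists.2 hsub, List.mem_permutations'.2 hperm.symm⟩

/-- `w` stands for the worth `v π*` of an optimal sequence. -/
def IsBasisSolution {n : ℕ} (v : TSeq n → ℝ) (w : ℝ) (x : Fin n → ℝ) : Prop :=
  (∀ π : TSeq n, π.Nodup → π ≠ [] → v π ≤ ∑ i ∈ π.toFinset, x i) ∧ ∑ i, x i = w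

def reduction {n : ℕ} (φ : TSeq n → Fin n → ℝ) (i : Fin n) : ℝ :=
  (1 / n.factorial : ℝ) * ∑ σ : Equiv.Perm (Fin n), φ (List.ofFn ⇑σ) i

section SolutionConcept

variable {n : ℕ} {φ : TSeq n → Fin n → ℝ} {πopt : TSeq n}

theorem isBasisSolution_of_optimal {v : TSeq n → ℝ}
    (hSE : ∀ π : TSeq n, π.Nodup → π ≠ [] → ∑ i ∈ π.toFinset, φ π i = v π)
    (hopt : ∀ π : TSeq n, π.Nodup → ∀ i, φ π i ≤ φ πopt i)
    (hnodup : πopt.Nodup) (hne : πopt ≠ []) (hfull : πopt.toFinset = Finset.univ) :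
    IsBasisSolution v (v πopt) (φ πopt) := by
  refine ⟨fun π hπ hπne => ?_, ?_⟩
  · rw [← hSE π hπ hπne]
    exact Finset.sum_le_sum fun i _ => hopt π hπ i
  · rw [← hfull, hSE πopt hnodup hne]

theorem reduction_le_of_optimal (hopt : ∀ π : TSeq n, π.Nodup → ∀ i, φ π i ≤ φ πopt i)
    (i : Fin n) : reduction φ i ≤ φ πopt i := by
  have hsum : ∑ σ : Equiv.Perm (Fin n), φ (List.ofFn ⇑σ) i ≤ n.factorial * φ πopt i := by
    simpa [Fintype.card_perm] using
      Finset.sum_le_card_nsmul (Finset.univ : Finset (Equiv.Perm (Fin n))) _ (φ πopt i)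
        fun σ _ => hopt _ (List.nodup_ofFn.2 σ.injective) i
  have hfac : (0 : ℝ) < n.factorial := by positivity
  rw [reduction, one_div, inv_mul_le_iff₀ hfac]
  exact hsum

end SolutionConcept

theorem extShap_intCast {n : ℕ} (w : TSeq n → ℤ) (i : Fin n) {s : ℤ}
    (hs : ∑ σ : Equiv.Perm (Fin n),
      (if i ∈ List.ofFn ⇑σ then
        w (prefBefore (List.ofFn ⇑σ) i ++ [i]) - w (prefBefore (List.ofFn ⇑σ) i) else 0) = s) :
    extShap (fun π => (w π : ℝ)) i = s / n.factorial := by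
  simp only [← hs, extShap, margSol]
  push_cast
  ring

-- Players 1, 2, 3 are `0, 1, 2 : Fin 3`, so the optimal sequence `213` is `[1, 0, 2]`.
def worth : TSeq 3 → ℤ
  | [0] => 1 | [1] => 3 | [2] => 4
  | [0, 1] => 3 | [0, 2] => 4 | [1, 0] => 4 | [1, 2] => 5 | [2, 0] => 5 | [2, 1] => 5
  | [0, 1, 2] => 7 | [0, 2, 1] => 6 | [1, 0, 2] => 8
  | [1, 2, 0] => 7 | [2, 0, 1] => 7 | [2, 1, 0] => 7
  | _ => 0

def game : TSeq 3 → ℝ := fun π => worth π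

theorem game_mono (π π' : TSeq 3) (h' : π'.Nodup) (hne : π ≠ []) (hpre : π <+: π') :
    game π ≤ game π' := by
  unfold game
  have key : ∀ π' ∈ injSeqs 3, ∀ π ∈ π'.inits, π ≠ [] → worth π ≤ worth π' := by decide
  exact_mod_cast key π' (mem_injSeqs h') π ((List.mem_inits _ _).2 hpre) hne

theorem game_le_eight (π : TSeq 3) (h : π.Nodup) : game π ≤ 8 := by
  unfold game
  have key : ∀ π ∈ injSeqs 3, worth π ≤ 8 := by decide
  exact_mod_cast key π (mem_injSeqs h)

theorem isBasisSolution_game_iff (x : Fin 3 → ℝ) :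
    IsBasisSolution game 8 x ↔ x 0 = 1 ∧ x 1 = 3 ∧ x 2 = 4 := by
  constructor
  · rintro ⟨hcore, hsum⟩
    have h0 := hcore [0] (by decide) (by decide)
    have h1 := hcore [1] (by decide) (by decide)
    have h2 := hcore [2] (by decide) (by decide)
    norm_num [game, worth] at h0 h1 h2
    rw [Fin.sum_univ_three] at hsum
    refine ⟨by linarith, by linarith, by linarith⟩
  · rintro ⟨h0, h1, h2⟩
    refine ⟨fun π hπ hne => ?_, by rw [Fin.sum_univ_three, h0, h1, h2]; norm_num⟩
    have hx : x = fun i => ((![1, 3, 4] i : ℤ) : ℝ) := by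
      ext i; fin_cases i <;> simp [h0, h1, h2]
    have key : ∀ π ∈ injSeqs 3, π ≠ [] → worth π ≤ ∑ i ∈ π.toFinset, ![1, 3, 4] i := by decide
    rw [hx]
    unfold game
    push_cast
    exact_mod_cast key π (mem_injSeqs hπ) hne

theorem extShap_game : extShap game 0 = 8 / 6 := by
  unfold game
  rw [extShap_intCast worth 0 (s := 8) (by decide)]
  norm_num [Nat.factorial]

/-- a concrete monotone 3-player TCG with a unique basis solution x = (1,3,4),
    optimal sequence 213 of worth 8, Ext-Shap₁ = 8/6 > 1 = x₁, so no solution concept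
    satisfying I4OA, OIR and SE has its reduction equal to Ext-Shap.
    (Players 1, 2, 3 are encoded as 0, 1, 2 : Fin 3.) -/
theorem stmt17 :
    ∃ v : TSeq 3 → ℝ,
      (v [0] = 1 ∧ v [1] = 3 ∧ v [2] = 4 ∧
       v [0,1] = 3 ∧ v [0,2] = 4 ∧ v [1,0] = 4 ∧ v [1,2] = 5 ∧ v [2,0] = 5 ∧ v [2,1] = 5 ∧
       v [0,1,2] = 7 ∧ v [0,2,1] = 6 ∧ v [1,0,2] = 8 ∧ v [1,2,0] = 7 ∧
       v [2,0,1] = 7 ∧ v [2,1,0] = 7) ∧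
      -- monotone
      (∀ π π' : TSeq 3, π'.Nodup → π ≠ [] → π <+: π' → v π ≤ v π') ∧
      -- the optimal sequence is 213 with worth 8
      (v [1,0,2] = 8 ∧ ∀ π : TSeq 3, π.Nodup → π ≠ [] → v π ≤ 8) ∧
      -- unique basis solution x = (1,3,4)
      (∀ x : Fin 3 → ℝ,
        ((∀ π : TSeq 3, π.Nodup → π ≠ [] → v π ≤ ∑ i ∈ π.toFinset, x i) ∧
         ∑ i : Fin 3, x i = 8)
        ↔ (x 0 = 1 ∧ x 1 = 3 ∧ x 2 = 4)) ∧
      -- Ext-Shap₁ = 8/6 > 1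
      (extShap v 0 = 8 / 6 ∧ (1:ℝ) < extShap v 0) ∧
      -- impossibility: no solution concept with I4OA, OIR and SE reduces to Ext-Shap
      ¬ ∃ φ : TSeq 3 → Fin 3 → ℝ,
          (∀ (π : TSeq 3) (i : Fin 3), i ∉ π → φ π i = 0) ∧
          -- SE
          (∀ π : TSeq 3, π.Nodup → π ≠ [] → ∑ i ∈ π.toFinset, φ π i = v π) ∧
          -- OIR
          (∀ π π' : TSeq 3, π'.Nodup → π <+: π' → ∀ i : Fin 3, φ π i ≤ φ π' i) ∧
          -- I4OA (the optimal sequence is [1,0,2], i.e. 213)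
          (∀ π : TSeq 3, π.Nodup → ∀ i : Fin 3, φ π i ≤ φ [1,0,2] i) ∧
          -- reduction equals Ext-Shap
          (∀ i : Fin 3,
            (1 / (3:ℕ).factorial : ℝ) * ∑ σ : Equiv.Perm (Fin 3), φ (List.ofFn ⇑σ) i
              = extShap v i) := by
  refine ⟨game, by norm_num [game, worth], game_mono,
    ⟨by norm_num [game, worth], fun π hπ _ => game_le_eight π hπ⟩, isBasisSolution_game_iff,
    ⟨extShap_game, by rw [extShap_game]; norm_num⟩, ?_⟩
  rintro ⟨φ, -, hSE, -, hopt, hred⟩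
  have hbasis : IsBasisSolution game 8 (φ [1, 0, 2]) := by
    simpa [game, worth] using
      isBasisSolution_of_optimal hSE hopt (by decide) (by decide) (by decide)
  have hφ : φ [1, 0, 2] 0 = 1 := ((isBasisSolution_game_iff _).1 hbasis).1
  have hle : extShap game 0 ≤ φ [1, 0, 2] 0 :=
    (hred 0).symm.trans_le (reduction_le_of_optimal hopt 0)
  rw [extShap_game, hφ] at hle
  norm_num at hle
end
end

section
/- There exists a monotone 2-player temporal cooperative game for which MargSol violates I4OA: in the game with v(1)=3, v(2)=1, v(12)=8, v(21)=5, the optimal sequence is π*=12 with worth 8, but MargSol_1(12) = 3 < 4 = MargSol_1(21). -/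
noncomputable section

theorem List.Nodup.eq_of_fin_two {π : List (Fin 2)} (h : π.Nodup) :
    π = [] ∨ π = [0] ∨ π = [1] ∨ π = [0, 1] ∨ π = [1, 0] := by
  match π, h with
  | [], _ => simp
  | [a], _ => fin_cases a <;> simp
  | [a, b], h => fin_cases a <;> fin_cases b <;> simp_all
  | _ :: _ :: _ :: _, h => simpa using h.length_le_card

section MargSol

variable {n : ℕ} (v : TSeq n → ℝ) {i j : Fin n} (π : TSeq n)

@[simp]
theorem prefBefore_cons_self : prefBefore (i :: π) i = [] := by
  simp [prefBefore]

@[simp]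
theorem prefBefore_cons_of_ne (h : j ≠ i) : prefBefore (j :: π) i = j :: prefBefore π i := by
  simp [prefBefore, h]

theorem margSol_cons_self : margSol v (i :: π) i = v [i] - v [] := by
  simp [margSol]

theorem margSol_pair_of_ne (h : j ≠ i) : margSol v [j, i] i = v [j, i] - v [j] := by
  simp [margSol, h]

end MargSol

def exampleGame (π : TSeq 2) : ℝ :=
  if π = [0] then 3 else if π = [1] then 1 else if π = [0, 1] then 8
  else if π = [1, 0] then 5 else 0

theorem exampleGame_monotone (π π' : TSeq 2) (h' : π'.Nodup) (hπ : π ≠ []) (hp : π <+: π') :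
    exampleGame π ≤ exampleGame π' := by
  rw [← List.mem_inits] at hp
  rcases h'.eq_of_fin_two with rfl | rfl | rfl | rfl | rfl <;>
    simp only [List.inits, List.map, List.mem_cons, List.not_mem_nil, or_false] at hp <;>
    rcases hp with rfl | rfl | rfl <;>
    first | exact absurd rfl hπ | norm_num [exampleGame, List.cons_ne_nil]

theorem exampleGame_le_eight (π : TSeq 2) (h : π.Nodup) : exampleGame π ≤ 8 := by
  rcases h.eq_of_fin_two with rfl | rfl | rfl | rfl | rfl <;>
    norm_num [exampleGame, List.cons_ne_nil]

/-- Players 1, 2 are encoded as `0, 1 : Fin 2`. -/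
theorem stmt19 :
    ∃ v : TSeq 2 → ℝ,
      (v [0] = 3 ∧ v [1] = 1 ∧ v [0,1] = 8 ∧ v [1,0] = 5) ∧
      -- monotone
      (∀ π π' : TSeq 2, π'.Nodup → π ≠ [] → π <+: π' → v π ≤ v π') ∧
      -- the optimal sequence is 12
      (v [0,1] = 8 ∧ ∀ π : TSeq 2, π.Nodup → π ≠ [] → v π ≤ 8) ∧
      -- MargSol violates I4OA for player 1
      (margSol v [0,1] 0 = 3 ∧ margSol v [1,0] 0 = 4 ∧
        ¬ (∀ π : TSeq 2, π.Nodup → ∀ i : Fin 2, margSol v π i ≤ margSol v [0,1] i)) := by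
  have h12 : margSol exampleGame [0, 1] 0 = 3 := by
    norm_num [margSol_cons_self, exampleGame, List.cons_ne_nil]
  have h21 : margSol exampleGame [1, 0] 0 = 4 := by
    norm_num [margSol_pair_of_ne, exampleGame, List.cons_ne_nil]
  refine ⟨exampleGame, by norm_num [exampleGame, List.cons_ne_nil], exampleGame_monotone,
    ⟨by norm_num [exampleGame, List.cons_ne_nil], fun π h _ => exampleGame_le_eight π h⟩,
    h12, h21, ?_⟩
  intro hI4OA
  have := hI4OA [1, 0] (by decide) 0
  linarith
end
end
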